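/- Let α(t) = (t⁶, t⁷ + t¹⁰ + t¹¹). Let A, B ∈ m ⊂ ℂ[[x,y]] define a singular formal vector field X = A ∂/∂x + B ∂/∂y which leaves the branch Γ₀ parametrized by α invariant, in the sense that the pullback along α of its dual form vanishes: A(α(t))·(7t⁶ + 10t⁹ + 11t¹⁰) − B(α(t))·6t⁵ = 0 in ℂ[[t]]. Then X has vanishing second jet: A, B ∈ m³. -/

import Mathlib

/-!
Along `α` the monomial `x^i y^j` has `t`-order `6i + 7j`, so modulo `t¹⁸` the series `A(α(t))`
and `B(α(t))` only depend on the 2-jets of `A` and `B`, and modulo `t²³` the invariance equation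
becomes a linear system in the twelve coefficients of these 2-jets. Its only solution is zero.
-/

open PowerSeries

/-- Substitution of `(x(t), y(t))` (both with zero constant term) into a
two-variable formal power series. -/
noncomputable def substPS (xt yt : PowerSeries ℂ) (f : MvPowerSeries (Fin 2) ℂ) :
    PowerSeries ℂ :=
  PowerSeries.mk fun k =>
    ∑ ij ∈ Finset.range (k + 1) ×ˢ Finset.range (k + 1),
      MvPowerSeries.coeff (Finsupp.single 0 ij.1 + Finsupp.single 1 ij.2) f *
        PowerSeries.coeff k (xt ^ ij.1 * yt ^ ij.2)

/-- The maximal ideal of `ℂ[[x,y]]`: series with zero constant term. -/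
noncomputable def mIdeal : Ideal (MvPowerSeries (Fin 2) ℂ) :=
  RingHom.ker (MvPowerSeries.constantCoeff (σ := Fin 2) (R := ℂ))

/-- The `x`-component `t⁶` of `α`. -/
noncomputable def alphaX : PowerSeries ℂ := PowerSeries.X ^ 6

/-- The `y`-component `t⁷ + t¹⁰ + t¹¹` of `α`. -/
noncomputable def alphaY : PowerSeries ℂ :=
  PowerSeries.X ^ 7 + PowerSeries.X ^ 10 + PowerSeries.X ^ 11

namespace MvPowerSeries

open Finsupp

variable {R : Type*}

section Semiring

variable [Semiring R]

theorem coeff_add_single_eq_zero_of_succ_le_order {σ : Type*} {f : MvPowerSeries σ R} {n : ℕ}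
    (hf : (n + 1 : ℕ) ≤ f.order) {d : σ →₀ ℕ} (hd : degree d < n) (i : σ) :
    coeff (d + single i 1) f = 0 :=
  coeff_of_lt_order <| hf.trans_lt' <| by
    simp only [map_add, degree_single]
    exact_mod_cast Nat.succ_lt_succ hd

noncomputable def quotX (f : MvPowerSeries (Fin 2) R) : MvPowerSeries (Fin 2) R :=
  fun d => coeff (d + single 0 1) f

noncomputable def quotY (f : MvPowerSeries (Fin 2) R) : MvPowerSeries (Fin 2) R :=
  fun d => if d 0 = 0 then coeff (d + single 1 1) f else 0

theorem coeff_quotX (f : MvPowerSeries (Fin 2) R) (d : Fin 2 →₀ ℕ) :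
    coeff d (quotX f) = coeff (d + single 0 1) f := rfl

theorem coeff_quotY (f : MvPowerSeries (Fin 2) R) (d : Fin 2 →₀ ℕ) :
    coeff d (quotY f) = if d 0 = 0 then coeff (d + single 1 1) f else 0 := rfl

theorem X_mul_quotX_add_X_mul_quotY {f : MvPowerSeries (Fin 2) R} (hf : constantCoeff f = 0) :
    X 0 * quotX f + X 1 * quotY f = f := by
  ext d
  simp only [map_add, X_def, coeff_monomial_mul, one_mul, single_le_iff, coeff_quotX,
    coeff_quotY]
  by_cases hx : 1 ≤ d 0
  · rw [if_pos hx, tsub_add_cancel_of_le (single_le_iff.2 hx)]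
    simp [Nat.one_le_iff_ne_zero.1 hx]
  by_cases hy : 1 ≤ d 1
  · rw [if_neg hx, if_pos hy, tsub_add_cancel_of_le (single_le_iff.2 hy)]
    simp [show d 0 = 0 by omega]
  · have hd : d = 0 := by ext i; fin_cases i <;> simp <;> omega
    simp [hd, hf]

theorem le_order_quotX {f : MvPowerSeries (Fin 2) R} {n : ℕ} (hf : (n + 1 : ℕ) ≤ f.order) :
    n ≤ (quotX f).order :=
  nat_le_order fun d hd =>
    (coeff_quotX f d).trans (coeff_add_single_eq_zero_of_succ_le_order hf hd 0)

theorem le_order_quotY {f : MvPowerSeries (Fin 2) R} {n : ℕ} (hf : (n + 1 : ℕ) ≤ f.order) :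
    n ≤ (quotY f).order :=
  nat_le_order fun d hd => by
    rw [coeff_quotY, coeff_add_single_eq_zero_of_succ_le_order hf hd 1, ite_self]

noncomputable def coeffXY (i j : ℕ) (f : MvPowerSeries (Fin 2) R) : R :=
  coeff (single 0 i + single 1 j) f

theorem nat_le_order_of_coeffXY_eq_zero {f : MvPowerSeries (Fin 2) R} {n : ℕ}
    (h : ∀ i j, i + j < n → f.coeffXY i j = 0) : n ≤ f.order :=
  nat_le_order fun d hd => by
    have hd' : d = single 0 (d 0) + single 1 (d 1) := by
      ext i; fin_cases i <;> simp
    rw [hd']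
    exact h _ _ (by simpa [degree_eq_sum, Fin.sum_univ_two] using hd)

end Semiring

theorem mem_span_X_pow_of_le_order [CommSemiring R] (n : ℕ) (f : MvPowerSeries (Fin 2) R)
    (hf : n ≤ f.order) :
    f ∈ Ideal.span {X 0, X 1} ^ n := by
  induction n generalizing f with
  | zero => simp
  | succ n ih =>
    have hf0 : constantCoeff f = 0 :=
      one_le_order_iff_constCoeff_eq_zero.1 (le_trans (by norm_cast; omega) hf)
    rw [← X_mul_quotX_add_X_mul_quotY hf0, pow_succ']
    exact add_mem
      (Ideal.mul_mem_mul (Ideal.subset_span (by simp)) (ih _ (le_order_quotX hf)))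
      (Ideal.mul_mem_mul (Ideal.subset_span (by simp)) (ih _ (le_order_quotY hf)))

end MvPowerSeries

theorem mem_mIdeal_pow_of_le_order {f : MvPowerSeries (Fin 2) ℂ} {n : ℕ} (hf : n ≤ f.order) :
    f ∈ mIdeal ^ n := by
  have hspan : Ideal.span {MvPowerSeries.X 0, MvPowerSeries.X 1} ≤ mIdeal := by
    rw [Ideal.span_le]
    rintro _ (rfl | rfl) <;> simp [mIdeal]
  exact Ideal.pow_right_mono hspan n (MvPowerSeries.mem_span_X_pow_of_le_order n f hf)

noncomputable def twoJetAlongAlpha (f : MvPowerSeries (Fin 2) ℂ) : PowerSeries ℂ :=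
  C (f.coeffXY 0 0) + C (f.coeffXY 1 0) * alphaX + C (f.coeffXY 0 1) * alphaY
    + C (f.coeffXY 2 0) * alphaX ^ 2 + C (f.coeffXY 1 1) * (alphaX * alphaY)
    + C (f.coeffXY 0 2) * alphaY ^ 2

theorem alphaX_pow_mul_alphaY_pow (i j : ℕ) :
    alphaX ^ i * alphaY ^ j = X ^ (6 * i + 7 * j) * (1 + X ^ 3 + X ^ 4) ^ j := by
  rw [alphaX, alphaY, pow_add, pow_mul, pow_mul, mul_assoc, ← mul_pow]
  ring

theorem coeff_alphaX_pow_mul_alphaY_pow_of_lt {i j k : ℕ} (hk : k < 6 * i + 7 * j) :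
    coeff k (alphaX ^ i * alphaY ^ j) = 0 := by
  rw [alphaX_pow_mul_alphaY_pow, coeff_X_pow_mul', if_neg hk.not_ge]

theorem coeff_substPS_alpha (f : MvPowerSeries (Fin 2) ℂ) {k : ℕ} (hk : k < 18) :
    coeff k (substPS alphaX alphaY f) = coeff k (twoJetAlongAlpha f) := by
  set S := Finset.range (k + 1) ×ˢ Finset.range (k + 1)
  set T : Finset (ℕ × ℕ) := {(0, 0), (1, 0), (0, 1), (2, 0), (1, 1), (0, 2)}
  have hzero (p : ℕ × ℕ) (hp : k < 6 * p.1 + 7 * p.2) :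
      MvPowerSeries.coeff (Finsupp.single 0 p.1 + Finsupp.single 1 p.2) f *
        coeff k (alphaX ^ p.1 * alphaY ^ p.2) = 0 := by
    rw [coeff_alphaX_pow_mul_alphaY_pow_of_lt hp, mul_zero]
  rw [substPS, coeff_mk, Finset.sum_subset (Finset.subset_union_left (s₂ := T)),
    ← Finset.sum_subset (Finset.subset_union_right (s₁ := S))]
  · simp [T, twoJetAlongAlpha, coeff_C_mul, coeff_C, MvPowerSeries.coeffXY]
    ring
  all_goals
    rintro ⟨i, j⟩ - hij
    refine hzero _ ?_
    simp [T] at hij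
    omega

theorem X_pow_dvd_substPS_alpha_sub_twoJetAlongAlpha (f : MvPowerSeries (Fin 2) ℂ) :
    X ^ 18 ∣ substPS alphaX alphaY f - twoJetAlongAlpha f :=
  X_pow_dvd_iff.2 fun k hk => by rw [map_sub, coeff_substPS_alpha f hk, sub_self]

/-- The pullback of `ω_X` along `α`, with `a = A(α(t))` and `b = B(α(t))`. -/
noncomputable def alphaPullback (a b : PowerSeries ℂ) : PowerSeries ℂ :=
  a * (C 7 * X ^ 6 + C 10 * X ^ 9 + C 11 * X ^ 10) - b * (C 6 * X ^ 5)

theorem X_pow_dvd_alphaPullback_sub {a a' b b' : PowerSeries ℂ} (ha : X ^ 18 ∣ a - a')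
    (hb : X ^ 18 ∣ b - b') : X ^ 23 ∣ alphaPullback a b - alphaPullback a' b' := by
  obtain ⟨c, hc⟩ := ha
  obtain ⟨d, hd⟩ := hb
  refine ⟨c * (C 7 * X + C 10 * X ^ 4 + C 11 * X ^ 5) - d * C 6, ?_⟩
  unfold alphaPullback
  linear_combination (C 7 * X ^ 6 + C 10 * X ^ 9 + C 11 * X ^ 10) * hc - C 6 * X ^ 5 * hd

theorem coeffXY_eq_zero_of_X_pow_dvd_alphaPullback {A B : MvPowerSeries (Fin 2) ℂ}
    (h : X ^ 23 ∣ alphaPullback (twoJetAlongAlpha A) (twoJetAlongAlpha B))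
    (i j : ℕ) (hij : i + j < 3) : A.coeffXY i j = 0 ∧ B.coeffXY i j = 0 := by
  have e (k : ℕ) (hk : k < 23) := X_pow_dvd_iff.1 h k hk
  have e5 := e 5 (by norm_num)
  have e6 := e 6 (by norm_num)
  have e11 := e 11 (by norm_num)
  have e12 := e 12 (by norm_num)
  have e13 := e 13 (by norm_num)
  have e15 := e 15 (by norm_num)
  have e17 := e 17 (by norm_num)
  have e18 := e 18 (by norm_num)
  have e19 := e 19 (by norm_num)
  have e20 := e 20 (by norm_num)
  have e21 := e 21 (by norm_num)
  have e22 := e 22 (by norm_num)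
  simp [alphaPullback, twoJetAlongAlpha, alphaX, alphaY, sq, mul_add, add_mul, ← mul_assoc,
    ← pow_add, coeff_mul_X_pow'] at e5 e6 e11 e12 e13 e15 e17 e18 e19 e20 e21 e22
  have hA10 : A.coeffXY 1 0 = 0 := by linear_combination (e15 - e12) / 3
  have hB01 : B.coeffXY 0 1 = 0 := by linear_combination (7 * hA10 - e12) / 6
  have hB20 : B.coeffXY 2 0 = 0 := by linear_combination (18 * e13 - e17) / 6
  have hA20 : A.coeffXY 2 0 = 0 := by linear_combination (e21 - e18 - 11 * e13) / 3
  have hB11 : B.coeffXY 1 1 = 0 := by linear_combination (7 * hA20 - e18) / 6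
  have hA02 : A.coeffXY 0 2 = 0 := by linear_combination (e20 - 21 * e13) / 7
  have hA11 : A.coeffXY 1 1 = 0 := by
    linear_combination (e22 - 2 * e19 - 11 * hA20 + 6 * hB11 + 20 * e13) / 3
  have hB02 : B.coeffXY 0 2 = 0 := by linear_combination (7 * hA11 + 10 * e13 - e19) / 6
  obtain ⟨rfl, rfl⟩ | ⟨rfl, rfl⟩ | ⟨rfl, rfl⟩ | ⟨rfl, rfl⟩ | ⟨rfl, rfl⟩ | ⟨rfl, rfl⟩ :
      (i = 0 ∧ j = 0) ∨ (i = 1 ∧ j = 0) ∨ (i = 0 ∧ j = 1) ∨ (i = 2 ∧ j = 0) ∨ (i = 1 ∧ j = 1) ∨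
        (i = 0 ∧ j = 2) := by omega
  exacts [⟨e6, e5⟩, ⟨hA10, e11⟩, ⟨e13, hB01⟩, ⟨hA20, hB20⟩, ⟨hA11, hB11⟩, ⟨hA02, hB02⟩]

theorem invariant_vector_field_of_gamma0_has_zero_two_jet_general
    (A B : MvPowerSeries (Fin 2) ℂ)
    (hinv : substPS alphaX alphaY A *
          (PowerSeries.C (R := ℂ) 7 * PowerSeries.X ^ 6 + PowerSeries.C (R := ℂ) 10 * PowerSeries.X ^ 9 +
            PowerSeries.C (R := ℂ) 11 * PowerSeries.X ^ 10) -
        substPS alphaX alphaY B * (PowerSeries.C (R := ℂ) 6 * PowerSeries.X ^ 5) = 0) :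
    A ∈ mIdeal ^ 3 ∧ B ∈ mIdeal ^ 3 := by
  have hjet := X_pow_dvd_alphaPullback_sub
    (X_pow_dvd_substPS_alpha_sub_twoJetAlongAlpha A)
    (X_pow_dvd_substPS_alpha_sub_twoJetAlongAlpha B)
  rw [show alphaPullback (substPS alphaX alphaY A) (substPS alphaX alphaY B) = 0 from hinv,
    zero_sub, dvd_neg] at hjet
  have hcoeff := coeffXY_eq_zero_of_X_pow_dvd_alphaPullback hjet
  exact ⟨mem_mIdeal_pow_of_le_order
      (MvPowerSeries.nat_le_order_of_coeffXY_eq_zero fun i j hij => (hcoeff i j hij).1),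
    mem_mIdeal_pow_of_le_order
      (MvPowerSeries.nat_le_order_of_coeffXY_eq_zero fun i j hij => (hcoeff i j hij).2)⟩

theorem invariant_vector_field_of_gamma0_has_zero_two_jet
    (A B : MvPowerSeries (Fin 2) ℂ)
    (hA : A ∈ mIdeal) (hB : B ∈ mIdeal)
    (hinv : substPS alphaX alphaY A *
          (PowerSeries.C (R := ℂ) 7 * PowerSeries.X ^ 6 + PowerSeries.C (R := ℂ) 10 * PowerSeries.X ^ 9 +
            PowerSeries.C (R := ℂ) 11 * PowerSeries.X ^ 10) -
        substPS alphaX alphaY B * (PowerSeries.C (R := ℂ) 6 * PowerSeries.X ^ 5) = 0) :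
    A ∈ mIdeal ^ 3 ∧ B ∈ mIdeal ^ 3 :=
  invariant_vector_field_of_gamma0_has_zero_two_jet_general A B hinv
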